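/- arXiv:2004.09999 — 3 statements merged into one kernel-verified Lean document; each statement's English description precedes it below -/
import Mathlib

section
/- Minimality of optimal solutions: let (a,b) be partitions of a finite linearly ordered set S and x an optimal solution of the embedding problem (a,b) (for every pair of distinct blocks x_{j₁}, x_{j₂} of x there exist a block a_i of a and distinct blocks b_{k₁} ≠ b_{k₂} of b with a_i ∩ x_{j₁} ∩ b_{k₁} ≠ ∅ and a_i ∩ x_{j₂} ∩ b_{k₂} ≠ ∅). Then for every solution y of (a,b) such that x refines into y (every block of y is a union of blocks of x), x = y. -/
/-!
If `x` refines into a solution `y` via `g`, then two distinct blocks `j₁ ≠ j₂` of `x` merged by `g`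
would give, by optimality, points `u ∈ a_i ∩ x_{j₁} ∩ b_{k₁}` and `v ∈ a_i ∩ x_{j₂} ∩ b_{k₂}` lying
in the same blocks of `a` and of `y` but in different blocks of `b`, which a solution forbids.
Hence `g` is injective and `x`, `y` induce the same partition.
-/

namespace PartitionEmbedding

variable {S α β γ : Type*}

def IsSolution (a : S → α) (b : S → γ) (y : S → β) : Prop :=
  ∃ f : α × β → γ, ∀ s, f (a s, y s) = b s

def IsOptimal (a : S → α) (b : S → γ) (x : S → β) : Prop :=
  ∀ j₁ j₂ : β, j₁ ≠ j₂ →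
    ∃ (i : α) (k₁ k₂ : γ), k₁ ≠ k₂ ∧
      (a ⁻¹' {i} ∩ x ⁻¹' {j₁} ∩ b ⁻¹' {k₁}).Nonempty ∧
      (a ⁻¹' {i} ∩ x ⁻¹' {j₂} ∩ b ⁻¹' {k₂}).Nonempty

variable {a : S → α} {b : S → γ}

theorem IsSolution.eq_of_eq_of_eq {y : S → β} (hy : IsSolution a b y) {u v : S}
    (hauv : a u = a v) (hyuv : y u = y v) : b u = b v := by
  obtain ⟨f, hf⟩ := hy
  rw [← hf u, ← hf v, hauv, hyuv]

theorem IsOptimal.injective_of_comp_eq {ι : Type*} {x : S → ι} {y : S → β}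
    (hx : IsOptimal a b x) (hy : IsSolution a b y) {g : ι → β} (hg : g ∘ x = y) :
    Function.Injective g := by
  intro j₁ j₂ hgj
  by_contra hne
  obtain ⟨i, k₁, k₂, hk, ⟨u, ⟨hua, hux⟩, hub⟩, ⟨v, ⟨hva, hvx⟩, hvb⟩⟩ := hx j₁ j₂ hne
  have hyuv : y u = y v := by
    rw [← hg, Function.comp_apply, Function.comp_apply, hux, hvx, hgj]
  exact hk (hub.symm.trans ((hy.eq_of_eq_of_eq (hua.trans hva.symm) hyuv).trans hvb))

end PartitionEmbedding

theorem stmt_14_general {S : Type*} {n m p q : ℕ}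
    (a : S → Fin n) (b : S → Fin m) (x : S → Fin p) (y : S → Fin q)
    (fy : Fin n × Fin q → Fin m) (hfy : ∀ s, fy (a s, y s) = b s)
    (hopt : ∀ j₁ j₂ : Fin p, j₁ ≠ j₂ →
      ∃ (i : Fin n) (k₁ k₂ : Fin m), k₁ ≠ k₂ ∧
        (a ⁻¹' {i} ∩ x ⁻¹' {j₁} ∩ b ⁻¹' {k₁}).Nonempty ∧
        (a ⁻¹' {i} ∩ x ⁻¹' {j₂} ∩ b ⁻¹' {k₂}).Nonempty)
    (g : Fin p → Fin q) (hg : g ∘ x = y) :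
    ∀ s t : S, x s = x t ↔ y s = y t := by
  have hinj : Function.Injective g :=
    PartitionEmbedding.IsOptimal.injective_of_comp_eq hopt ⟨fy, hfy⟩ hg
  intro s t
  rw [← hg, Function.comp_apply, Function.comp_apply, hinj.eq_iff]

/-- Minimality of optimal solutions: if `x` is an optimal solution of the embedding
problem `(a,b)` and `y` is a solution into which `x` refines, then `x = y`
(as partitions, i.e. they induce the same equivalence relation on `S`). -/
theorem stmt_14 {S : Type*} [Fintype S] {n m p q : ℕ}
    (a : S → Fin n) (b : S → Fin m) (x : S → Fin p) (y : S → Fin q)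
    (ha : Function.Surjective a) (hb : Function.Surjective b)
    (hx : Function.Surjective x) (hy : Function.Surjective y)
    (fx : Fin n × Fin p → Fin m) (hfx : ∀ s, fx (a s, x s) = b s)
    (fy : Fin n × Fin q → Fin m) (hfy : ∀ s, fy (a s, y s) = b s)
    (hopt : ∀ j₁ j₂ : Fin p, j₁ ≠ j₂ →
      ∃ (i : Fin n) (k₁ k₂ : Fin m), k₁ ≠ k₂ ∧
        (a ⁻¹' {i} ∩ x ⁻¹' {j₁} ∩ b ⁻¹' {k₁}).Nonempty ∧
        (a ⁻¹' {i} ∩ x ⁻¹' {j₂} ∩ b ⁻¹' {k₂}).Nonempty)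
    (g : Fin p → Fin q) (hg : g ∘ x = y) :
    ∀ s t : S, x s = x t ↔ y s = y t :=
  stmt_14_general a b x y fy hfy hopt g hg
end

section
/- Contraction invariance: let a be a partition of finite S and x a partition with blocks {x_j}_{j∈[p]}. If (j₁,j₂) with j₁ ≠ j₂ satisfies: for every block a_i of a, a_i ∩ x_{j₁} ≠ ∅ implies a_i ∩ x_{j₂} = ∅, then a × x = a × x[j₁,j₂], where x[j₁,j₂] is the partition obtained from x by merging blocks x_{j₁} and x_{j₂}. -/
theorem apply_ne_of_fiber_inter_eq_empty {S α β : Type*} {a : S → α} {x : S → β} {j₁ j₂ : β}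
    (h : ∀ i : α, (a ⁻¹' {i} ∩ x ⁻¹' {j₁}).Nonempty → a ⁻¹' {i} ∩ x ⁻¹' {j₂} = ∅)
    {s t : S} (ha : a s = a t) (hs : x s = j₁) : x t ≠ j₂ := fun ht =>
  (Set.eq_empty_iff_forall_notMem.mp (h (a s) ⟨s, rfl, hs⟩)) t ⟨ha.symm, ht⟩

theorem stmt_15_general {S : Type*} {n p : ℕ} (a : S → Fin n) (x : S → Fin p)
    (j₁ j₂ : Fin p)
    (h : ∀ i : Fin n, (a ⁻¹' {i} ∩ x ⁻¹' {j₁}).Nonempty → a ⁻¹' {i} ∩ x ⁻¹' {j₂} = ∅) :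
    ∀ s t : S, (a s = a t ∧ x s = x t) ↔
      (a s = a t ∧ (x s = x t ∨
        ((x s = j₁ ∨ x s = j₂) ∧ (x t = j₁ ∨ x t = j₂)))) := by
  intro s t
  refine ⟨fun ⟨ha, hx⟩ => ⟨ha, .inl hx⟩, ?_⟩
  rintro ⟨ha, hx | ⟨hs | hs, ht | ht⟩⟩
  · exact ⟨ha, hx⟩
  · exact ⟨ha, hs.trans ht.symm⟩
  · exact absurd ht (apply_ne_of_fiber_inter_eq_empty h ha hs)
  · exact absurd hs (apply_ne_of_fiber_inter_eq_empty h ha.symm ht)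
  · exact ⟨ha, hs.trans ht.symm⟩

/-- Contraction invariance: if no block of `a` meets both `x⁻¹(j₁)` and `x⁻¹(j₂)`,
then `a × x = a × x[j₁,j₂]`, where `x[j₁,j₂]` merges the blocks `x⁻¹(j₁)` and
`x⁻¹(j₂)` of `x`. -/
theorem stmt_15 {S : Type*} [Fintype S] {n p : ℕ} (a : S → Fin n) (x : S → Fin p)
    (j₁ j₂ : Fin p) (hne : j₁ ≠ j₂)
    (h : ∀ i : Fin n, (a ⁻¹' {i} ∩ x ⁻¹' {j₁}).Nonempty → a ⁻¹' {i} ∩ x ⁻¹' {j₂} = ∅) :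
    ∀ s t : S, (a s = a t ∧ x s = x t) ↔
      (a s = a t ∧ (x s = x t ∨
        ((x s = j₁ ∨ x s = j₂) ∧ (x t = j₁ ∨ x t = j₂)))) :=
  stmt_15_general a x j₁ j₂ h
end

section
/- Embedding decomposition II: let a and x be partitions of a finite set S with blocks {a_i}_{i∈[n]} and {x_j}_{j∈[m]} respectively. For every function r : [n] → [m], the common refinement a × x equals a × ∏_{i=1}^n ∏_{j≠r(i)} δ(a_i ∩ x_j). -/
/-- This is why the factors `δ(aᵢ ∩ x_{r i})` may be omitted from the product. -/
theorem eq_of_forall_ne_eq_iff_eq {β : Type*} {u v b : β} (h : ∀ j, j ≠ b → (u = j ↔ v = j)) :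
    u = v := by
  by_contra huv
  by_cases hu : u = b
  · exact huv ((h v fun hv => huv (hu.trans hv.symm)).mpr rfl)
  · exact huv ((h u hu).mp rfl).symm

theorem stmt_17_general {S : Type*} {n m : ℕ} (a : S → Fin n) (x : S → Fin m)
    (r : Fin n → Fin m) :
    ∀ s t : S, (a s = a t ∧ x s = x t) ↔
      (a s = a t ∧ ∀ (i : Fin n) (j : Fin m), j ≠ r i →
        (s ∈ a ⁻¹' {i} ∩ x ⁻¹' {j} ↔ t ∈ a ⁻¹' {i} ∩ x ⁻¹' {j})) := by
  intro s t
  simp only [Set.mem_inter_iff, Set.mem_preimage, Set.mem_singleton_iff]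
  constructor
  · rintro ⟨hat, hxt⟩
    exact ⟨hat, fun i j _ => by rw [hat, hxt]⟩
  · rintro ⟨hat, hsep⟩
    refine ⟨hat, eq_of_forall_ne_eq_iff_eq (b := r (a s)) fun j hj => ?_⟩
    simpa [hat] using hsep (a s) j hj

/-- Embedding decomposition II: for any `r : [n] → [m]`,
`a × x = a × ∏ᵢ ∏_{j ≠ r i} δ(aᵢ ∩ xⱼ)` as partitions of `S`. -/
theorem stmt_17 {S : Type*} [Fintype S] {n m : ℕ} (a : S → Fin n) (x : S → Fin m)
    (ha : Function.Surjective a) (hx : Function.Surjective x)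
    (r : Fin n → Fin m) :
    ∀ s t : S, (a s = a t ∧ x s = x t) ↔
      (a s = a t ∧ ∀ (i : Fin n) (j : Fin m), j ≠ r i →
        (s ∈ a ⁻¹' {i} ∩ x ⁻¹' {j} ↔ t ∈ a ⁻¹' {i} ∩ x ⁻¹' {j})) :=
  stmt_17_general a x r
end
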